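/- Let R be a commutative ring and d : R → R a derivation, and let I be a type. Suppose g : I → I → GL(n, R) satisfies the cocycle condition g(i,j)·g(j,k) = g(i,k) and g(i,i) = 1 for all i, j, k ∈ I. Define c(i,j) := trace( g(i,j)⁻¹ · D(g(i,j)) ), where D applies d entrywise. Then for all i, j, k ∈ I: c(j,k) − c(i,k) + c(i,j) = 0; that is, the family c is a Čech 1-cocycle. -/

import Mathlib

/-! The map `U ↦ tr (U⁻¹ · D U)` is a logarithmic derivative: by the Leibniz rule and the
cyclicity of the trace it turns products into sums. Applied to `g i k = g i j * g j k` this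
is exactly the cocycle identity. -/

namespace Matrix

theorem map_mul_of_leibniz {l m o R : Type*} [Fintype m] [NonUnitalNonAssocSemiring R]
    (d : R →+ R) (hd_mul : ∀ a b : R, d (a * b) = d a * b + a * d b)
    (A : Matrix l m R) (B : Matrix m o R) :
    (A * B).map d = A.map d * B + A * B.map d := by
  ext r s
  simp only [map_apply, mul_apply, add_apply, map_sum, hd_mul, Finset.sum_add_distrib]

variable {n R : Type*} [Fintype n] [DecidableEq n] [CommSemiring R]

def traceLogDeriv (d : R → R) (U : (Matrix n n R)ˣ) : R :=
  trace ((U⁻¹).val * U.val.map d)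

theorem traceLogDeriv_mul (d : R →+ R) (hd_mul : ∀ a b : R, d (a * b) = d a * b + a * d b)
    (U V : (Matrix n n R)ˣ) :
    traceLogDeriv d (U * V) = traceLogDeriv d U + traceLogDeriv d V := by
  have hU : (U⁻¹).val * U.val = 1 := U.inv_mul
  have hV : V.val * (V⁻¹).val = 1 := V.mul_inv
  simp only [traceLogDeriv, _root_.mul_inv_rev, Units.val_mul, map_mul_of_leibniz d hd_mul,
    Matrix.mul_add, trace_add]
  congr 1
  · rw [trace_mul_comm, Matrix.mul_assoc, ← Matrix.mul_assoc V.val, hV, Matrix.one_mul,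
      trace_mul_comm]
  · rw [Matrix.mul_assoc, ← Matrix.mul_assoc (U⁻¹).val, hU, Matrix.one_mul]

end Matrix

theorem atiyah_class_one_cocycle_general {R : Type*} [CommRing R] {n : ℕ} (d : R → R)
    (hd_add : ∀ a b : R, d (a + b) = d a + d b)
    (hd_mul : ∀ a b : R, d (a * b) = d a * b + a * d b)
    {I : Type*} (g : I → I → (Matrix (Fin n) (Fin n) R)ˣ)
    (hcoc : ∀ i j k : I, g i j * g j k = g i k)
    (i j k : I) :
    Matrix.trace ((Units.val (g j k)⁻¹) * ((Units.val (g j k)).map d))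
      - Matrix.trace ((Units.val (g i k)⁻¹) * ((Units.val (g i k)).map d))
      + Matrix.trace ((Units.val (g i j)⁻¹) * ((Units.val (g i j)).map d)) = 0 := by
  let D : R →+ R := AddMonoidHom.mk' d hd_add
  change Matrix.traceLogDeriv D (g j k) - Matrix.traceLogDeriv D (g i k)
      + Matrix.traceLogDeriv D (g i j) = 0
  rw [← hcoc i j k, Matrix.traceLogDeriv_mul D hd_mul]
  ring

/-- The trace of the Atiyah class is a Čech 1-cocycle: for transition matrices
`g : I → I → GL(n,R)` satisfying the cocycle condition, the cochains
`c(i,j) = tr(g(i,j)⁻¹ · D(g(i,j)))` (with `D` the entrywise derivation) satisfy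
`c(j,k) − c(i,k) + c(i,j) = 0`. -/
theorem atiyah_class_one_cocycle {R : Type*} [CommRing R] {n : ℕ} (d : R → R)
    (hd_add : ∀ a b : R, d (a + b) = d a + d b)
    (hd_mul : ∀ a b : R, d (a * b) = d a * b + a * d b)
    {I : Type*} (g : I → I → (Matrix (Fin n) (Fin n) R)ˣ)
    (hcoc : ∀ i j k : I, g i j * g j k = g i k)
    (hone : ∀ i : I, g i i = 1)
    (i j k : I) :
    Matrix.trace ((Units.val (g j k)⁻¹) * ((Units.val (g j k)).map d))
      - Matrix.trace ((Units.val (g i k)⁻¹) * ((Units.val (g i k)).map d))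
      + Matrix.trace ((Units.val (g i j)⁻¹) * ((Units.val (g i j)).map d)) = 0 :=
  atiyah_class_one_cocycle_general d hd_add hd_mul g hcoc i j k
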